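/- arXiv:1705.08028 — 2 statements merged into one kernel-verified Lean document; each statement's English description precedes it below -/
import Mathlib

section
/- Let D be a decoherence map on a nonempty compact convex set Ω in a finite-dimensional real vector space V, and let s_i and s_j be distinct extreme points of D(Ω). Then the refinement sets Ref(s_i) and Ref(s_j) are disjoint: Ref(s_i) ∩ Ref(s_j) = ∅. -/
/-!
If `s ∈ Ω` refines an extreme point `x` of `D(Ω)`, say `x = p • s + (1 - p) • t`, then applying
`D` (which fixes `x`, by idempotence) writes `x` as the same combination of `D s, D t ∈ D(Ω)`;
extremality forces `D s = x`. So a common refinement `s` of `sᵢ` and `sⱼ` would give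
`sᵢ = D s = sⱼ`.
-/

/-- `s` refines `x` (written `s ≻ x`) relative to the convex set `Ω`:
there exist `p ∈ (0,1]` and `t ∈ Ω` with `x = p • s + (1-p) • t`. -/
def Refines {V : Type*} [AddCommGroup V] [Module ℝ V] (Ω : Set V) (s x : V) : Prop :=
  ∃ p : ℝ, 0 < p ∧ p ≤ 1 ∧ ∃ t ∈ Ω, x = p • s + (1 - p) • t

/-- The refinement set of `x` in `Ω`: all states of `Ω` refining `x`. -/
def RefSet {V : Type*} [AddCommGroup V] [Module ℝ V] (Ω : Set V) (x : V) : Set V :=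
  {s ∈ Ω | Refines Ω s x}

/-- `F` is a face of `Ω`: a convex subset of `Ω` closed under refinement. -/
def IsFaceOf {V : Type*} [AddCommGroup V] [Module ℝ V] (F Ω : Set V) : Prop :=
  F ⊆ Ω ∧ Convex ℝ F ∧ ∀ s' ∈ F, ∀ s ∈ Ω, Refines Ω s s' → s ∈ F

/-- A decoherence map on `Ω`: a linear map sending `Ω` into itself, idempotent
on `Ω`, and purity-decreasing (if `D ρ ≻ ρ` then `ρ ≻ D ρ`). -/
def IsDecoherence {V : Type*} [AddCommGroup V] [Module ℝ V]
    (Ω : Set V) (D : V →ₗ[ℝ] V) : Prop :=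
  D '' Ω ⊆ Ω ∧ (∀ s ∈ Ω, D (D s) = D s) ∧
    ∀ ρ ∈ Ω, Refines Ω (D ρ) ρ → Refines Ω ρ (D ρ)

section

variable {V W : Type*} [AddCommGroup V] [Module ℝ V] [AddCommGroup W] [Module ℝ W]

theorem Refines.image (f : V →ₗ[ℝ] W) {Ω : Set V} {s x : V} (h : Refines Ω s x) :
    Refines (f '' Ω) (f s) (f x) := by
  obtain ⟨p, hp0, hp1, t, ht, rfl⟩ := h
  exact ⟨p, hp0, hp1, f t, Set.mem_image_of_mem f ht, by simp only [map_add, map_smul]⟩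

theorem Refines.eq_of_mem_extremePoints {A : Set V} {s x : V} (h : Refines A s x) (hs : s ∈ A)
    (hx : x ∈ A.extremePoints ℝ) : s = x := by
  obtain ⟨p, hp0, hp1, t, ht, rfl⟩ := h
  rcases hp1.eq_or_lt with rfl | hp1
  · simp
  · exact hx.2 hs ht ⟨p, 1 - p, hp0, sub_pos.2 hp1, add_sub_cancel p 1, rfl⟩

theorem LinearMap.apply_eq_self_of_mem_image {Ω : Set V} {D : V →ₗ[ℝ] V}
    (hidem : ∀ s ∈ Ω, D (D s) = D s) {x : V} (hx : x ∈ D '' Ω) : D x = x := by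
  obtain ⟨ρ, hρ, rfl⟩ := hx
  exact hidem ρ hρ

theorem apply_eq_of_mem_refSet_of_mem_extremePoints {Ω : Set V} {D : V →ₗ[ℝ] V}
    (hidem : ∀ s ∈ Ω, D (D s) = D s) {x s : V} (hx : x ∈ (D '' Ω).extremePoints ℝ)
    (hs : s ∈ RefSet Ω x) : D s = x := by
  have hDs : Refines (D '' Ω) (D s) (D x) := hs.2.image D
  rw [D.apply_eq_self_of_mem_image hidem hx.1] at hDs
  exact hDs.eq_of_mem_extremePoints (Set.mem_image_of_mem D hs.1) hx

end

theorem refSets_of_distinct_extremePoints_disjoint_general {V : Type*} [NormedAddCommGroup V]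
    [NormedSpace ℝ V]
    (Ω : Set V)
    (D : V →ₗ[ℝ] V) (hD : IsDecoherence Ω D)
    (si sj : V) (hsi : si ∈ (D '' Ω).extremePoints ℝ) (hsj : sj ∈ (D '' Ω).extremePoints ℝ)
    (hne' : si ≠ sj) :
    RefSet Ω si ∩ RefSet Ω sj = ∅ := by
  refine Set.eq_empty_of_forall_notMem fun s ⟨hs_i, hs_j⟩ ↦ hne' ?_
  rw [← apply_eq_of_mem_refSet_of_mem_extremePoints hD.2.1 hsi hs_i,
    ← apply_eq_of_mem_refSet_of_mem_extremePoints hD.2.1 hsj hs_j]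

/-- the refinement sets of distinct extreme points of `D '' Ω`
are disjoint. -/
theorem refSets_of_distinct_extremePoints_disjoint {V : Type*} [NormedAddCommGroup V]
    [NormedSpace ℝ V] [FiniteDimensional ℝ V]
    (Ω : Set V) (hne : Ω.Nonempty) (hcomp : IsCompact Ω) (hconv : Convex ℝ Ω)
    (D : V →ₗ[ℝ] V) (hD : IsDecoherence Ω D)
    (si sj : V) (hsi : si ∈ (D '' Ω).extremePoints ℝ) (hsj : sj ∈ (D '' Ω).extremePoints ℝ)
    (hne' : si ≠ sj) :
    RefSet Ω si ∩ RefSet Ω sj = ∅ :=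
  refSets_of_distinct_extremePoints_disjoint_general Ω D hD si sj hsi hsj hne'
end

section
/- Let D be a decoherence map on a nonempty compact convex set Ω in a finite-dimensional real vector space V, let s₁, …, sₙ (n ≥ 1) be distinct extreme points of D(Ω), suppose C := convexHull{s₁, …, sₙ} is a face of D(Ω), and let m := (1/n) • (s₁ + ⋯ + sₙ). Let E : V → ℝ be a linear functional with E(D(s)) = E(s) for all s ∈ Ω, E(s) ≥ 0 for all s ∈ Ω, and such that for y ∈ D(Ω), E(y) = 0 if and only if y ∈ C. Then {s ∈ Ω | E(s) = 0} = Ref(m); in particular Ref(m) is an exposed face of Ω. -/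
/-!
If `E x = 0` then `E (D x) = 0`, so `D x ∈ C`. Every point of the convex hull of finitely many
points refines their uniform mixture `m`, purity decrease gives `x ≻ D x`, and refinement is
transitive in a convex set, so `x ≻ m`. Conversely, a functional that is nonnegative on `Ω`
and vanishes at `m ∈ C` vanishes at every refinement of `m`.
-/

open Set

section Refinement

variable {V : Type*} [AddCommGroup V] [Module ℝ V] {Ω Ω' : Set V} {s x y : V}

theorem Refines.mono (h : Ω ⊆ Ω') : Refines Ω s x → Refines Ω' s x :=
  fun ⟨p, hp, hp1, t, ht, hx⟩ => ⟨p, hp, hp1, t, h ht, hx⟩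

theorem Refines.mem (hΩ : Convex ℝ Ω) (hs : s ∈ Ω) : Refines Ω s x → x ∈ Ω := by
  rintro ⟨p, hp, hp1, t, ht, rfl⟩
  exact hΩ hs ht hp.le (by linarith) (by ring)

theorem Refines.trans (hΩ : Convex ℝ Ω) (hsy : Refines Ω s y) (hyx : Refines Ω y x) :
    Refines Ω s x := by
  obtain ⟨p, hp, hp1, u, hu, rfl⟩ := hsy
  obtain ⟨q, hq, hq1, t, ht, rfl⟩ := hyx
  obtain ⟨w, hw, hw_eq⟩ :=
    hΩ.exists_mem_add_smul_eq hu ht (mul_nonneg hq.le (sub_nonneg.2 hp1)) (sub_nonneg.2 hq1)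
  refine ⟨q * p, mul_pos hq hp, mul_le_one₀ hq1 hp.le hp1, w, hw, ?_⟩
  rw [show 1 - q * p = q * (1 - p) + (1 - q) by ring, hw_eq]
  module

theorem Refines.map_eq_zero (E : V →ₗ[ℝ] ℝ) (hE : ∀ z ∈ Ω, 0 ≤ E z) (hs : s ∈ Ω)
    (hsx : Refines Ω s x) (hx : E x = 0) : E s = 0 := by
  obtain ⟨p, hp, hp1, t, ht, rfl⟩ := hsx
  simp only [map_add, map_smul, smul_eq_mul] at hx
  nlinarith [hE s hs, hE t ht]

/-- The midpoint `ρ` of `x` and `D x` satisfies `D ρ = D x ≻ ρ`, so purity decrease gives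
`ρ ≻ D x`, while `x ≻ ρ`. -/
theorem IsDecoherence.refines_apply {D : V →ₗ[ℝ] V} (hD : IsDecoherence Ω D)
    (hΩ : Convex ℝ Ω) (hx : x ∈ Ω) : Refines Ω x (D x) := by
  obtain ⟨hDΩ, hDD, hpur⟩ := hD
  have hDx : D x ∈ Ω := hDΩ ⟨x, hx, rfl⟩
  set ρ := (1 / 2 : ℝ) • x + (1 - 1 / 2 : ℝ) • D x
  have hρ : ρ ∈ Ω := hΩ hx hDx (by norm_num) (by norm_num) (by norm_num)
  have hDρ : D ρ = D x := by
    simp only [ρ, map_add, map_smul, hDD x hx]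
    module
  have hxρ : Refines Ω x ρ := ⟨1 / 2, by norm_num, by norm_num, D x, hDx, rfl⟩
  have hDρρ : Refines Ω (D ρ) ρ := ⟨1 / 2, by norm_num, by norm_num, x, hx, by rw [hDρ]; module⟩
  exact hxρ.trans hΩ (hDρ ▸ hpur ρ hρ hDρρ)

theorem exists_mem_stdSimplex_of_mem_convexHull_range {ι : Type*} [Fintype ι] {v : ι → V}
    (hy : y ∈ convexHull ℝ (range v)) : ∃ q ∈ stdSimplex ℝ ι, ∑ i, q i • v i = y := by
  classical
  have hv : range v =
      Fintype.linearCombination ℝ v '' range fun i j : ι => if i = j then (1 : ℝ) else 0 := by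
    rw [← range_comp]
    congr 1
    ext i
    simp [Fintype.linearCombination_apply]
  rw [hv, ← LinearMap.image_convexHull, convexHull_basis_eq_stdSimplex] at hy
  obtain ⟨q, hq, rfl⟩ := hy
  exact ⟨q, hq, (Fintype.linearCombination_apply ℝ v q).symm⟩

theorem refines_centroid_of_mem_convexHull {ι : Type*} [Fintype ι] {v : ι → V}
    (hy : y ∈ convexHull ℝ (range v)) :
    Refines (convexHull ℝ (range v)) y ((Fintype.card ι : ℝ)⁻¹ • ∑ i, v i) := by
  obtain ⟨q, ⟨hq0, hq1⟩, rfl⟩ := exists_mem_stdSimplex_of_mem_convexHull_range hy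
  set N : ℝ := (Fintype.card ι : ℝ)
  have hN : 1 ≤ N := by
    have : Nonempty ι := by
      by_contra h
      simp [not_nonempty_iff.1 h] at hq1
    exact Nat.one_le_cast.2 Fintype.card_pos
  have h2N : 2 * N - 1 ≠ 0 := by linarith
  have hq_le : ∀ i, q i ≤ 1 := fun i =>
    hq1 ▸ Finset.single_le_sum (fun j _ => hq0 j) (Finset.mem_univ i)
  -- the weights `(2 - q i) / (2N - 1)` make every coefficient of `(2N)⁻¹ • y + (1 - (2N)⁻¹) • t`
  -- equal to `N⁻¹`, and are nonnegative since `q i ≤ 1`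
  refine ⟨(2 * N)⁻¹, by positivity, inv_le_one_of_one_le₀ (by linarith),
    ∑ i, ((2 - q i) / (2 * N - 1)) • v i, ?_, ?_⟩
  · refine mem_convexHull_of_exists_fintype _ v
      (fun i => div_nonneg (by linarith [hq_le i]) (by linarith)) ?_ (mem_range_self ·) rfl
    rw [← Finset.sum_div, Finset.sum_sub_distrib, hq1, div_eq_one_iff_eq h2N, Finset.sum_const, Finset.card_univ, nsmul_eq_mul, mul_comm]
  · simp only [Finset.smul_sum, smul_smul, ← Finset.sum_add_distrib, ← add_smul]
    refine Finset.sum_congr rfl fun i _ => ?_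
    congr 1
    rw [show 1 - (2 * N)⁻¹ = (2 * N - 1) / (2 * N) by field_simp, div_mul_div_comm,
      mul_comm (2 * N - 1), mul_div_mul_right _ _ h2N]
    field_simp
    ring

end Refinement

theorem refSet_of_mixture_exposed_general {V : Type*} [NormedAddCommGroup V]
    [NormedSpace ℝ V]
    (Ω : Set V) (hconv : Convex ℝ Ω)
    (D : V →ₗ[ℝ] V) (hD : IsDecoherence Ω D)
    (n : ℕ) (hn : 1 ≤ n) (s : Fin n → V)
    (C : Set V) (hC : C = convexHull ℝ (Set.range s))
    (hface : IsFaceOf C (D '' Ω))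
    (m : V) (hm : m = (1 / (n : ℝ)) • ∑ i, s i)
    (E : V →ₗ[ℝ] ℝ)
    (hED : ∀ x ∈ Ω, E (D x) = E x)
    (hEpos : ∀ x ∈ Ω, 0 ≤ E x)
    (hEzero : ∀ y ∈ D '' Ω, (E y = 0 ↔ y ∈ C)) :
    {x ∈ Ω | E x = 0} = RefSet Ω m := by
  have hCΩ : C ⊆ D '' Ω := hface.1
  have hrefines : ∀ y ∈ C, Refines C y m := fun y hy => by
    have := refines_centroid_of_mem_convexHull (hC ▸ hy)
    rwa [Fintype.card_fin, ← one_div, ← hm, ← hC] at this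
  have hmC : m ∈ C := by
    have hs₀ : s ⟨0, hn⟩ ∈ C := hC ▸ subset_convexHull ℝ _ (mem_range_self _)
    exact (hrefines _ hs₀).mem (hC ▸ convex_convexHull ℝ _) hs₀
  ext x
  constructor
  · rintro ⟨hx, hEx⟩
    have hDxC : D x ∈ C := (hEzero _ ⟨x, hx, rfl⟩).1 ((hED x hx).trans hEx)
    exact ⟨hx, (hD.refines_apply hconv hx).trans hconv
      ((hrefines _ hDxC).mono (hCΩ.trans hD.1))⟩
  · rintro ⟨hx, hxm⟩
    exact ⟨hx, hxm.map_eq_zero E hEpos hx ((hEzero m (hCΩ hmC)).2 hmC)⟩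

/-- with `C = conv{s₁,…,sₙ}` a face of `D '' Ω` and `m` the uniform
mixture of the distinct extreme points `sᵢ`, a decoherence-invariant linear
functional `E`, nonnegative on `Ω` and vanishing on `D '' Ω` exactly on `C`,
vanishes on `Ω` exactly on `Ref(m)`; in particular `Ref(m)` is an exposed face. -/
theorem refSet_of_mixture_exposed {V : Type*} [NormedAddCommGroup V]
    [NormedSpace ℝ V] [FiniteDimensional ℝ V]
    (Ω : Set V) (hne : Ω.Nonempty) (hcomp : IsCompact Ω) (hconv : Convex ℝ Ω)
    (D : V →ₗ[ℝ] V) (hD : IsDecoherence Ω D)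
    (n : ℕ) (hn : 1 ≤ n) (s : Fin n → V) (hinj : Function.Injective s)
    (hext : ∀ i, s i ∈ (D '' Ω).extremePoints ℝ)
    (C : Set V) (hC : C = convexHull ℝ (Set.range s))
    (hface : IsFaceOf C (D '' Ω))
    (m : V) (hm : m = (1 / (n : ℝ)) • ∑ i, s i)
    (E : V →ₗ[ℝ] ℝ)
    (hED : ∀ x ∈ Ω, E (D x) = E x)
    (hEpos : ∀ x ∈ Ω, 0 ≤ E x)
    (hEzero : ∀ y ∈ D '' Ω, (E y = 0 ↔ y ∈ C)) :
    {x ∈ Ω | E x = 0} = RefSet Ω m :=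
  refSet_of_mixture_exposed_general Ω hconv D hD n hn s C hC hface m hm E hED hEpos hEzero
end
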